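/- arXiv:math/0212357 — 4 statements merged into one kernel-verified Lean document; each statement's English description precedes it below -/
import Mathlib

section
/- Let A be a Hurwitz real n×n matrix, b ∈ ℝⁿ, c ∈ ℝⁿ, and assume the impulse response h(t) = cᵀ e^{At} b satisfies h(t) ≥ 0 for all t ≥ 0. For a bounded measurable input u : [0,∞) → ℝ define the zero-initial-state output y(t) = ∫₀ᵗ h(t−s) u(s) ds. Then the L^∞-to-L^∞ induced gain equals the steady-state gain: (i) for every bounded measurable u and every t ≥ 0, |y(t)| ≤ (−cᵀ A⁻¹ b) · sup_{s≥0} |u(s)|, and (ii) the constant −cᵀ A⁻¹ b is optimal, i.e. sup over bounded measurable u with sup_{s}|u(s)| ≤ 1 of sup_{t≥0} |y(t)| equals −cᵀ A⁻¹ b. (Remark 3.2: for asymptotically stable SISO monotone linear systems, the L^∞ induced gain equals the steady-state gain −cᵀA⁻¹b.) -/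
/-!
The step response `s(t) = ∫₀ᵗ h = cᵀ A⁻¹ (e^{tA} - 1) b` is nondecreasing because `h ≥ 0`, and
tends to the steady-state gain `-cᵀ A⁻¹ b` because `e^{tA} → 0` for Hurwitz `A`. Hence
`|y(t)| ≤ M s(t) ≤ -cᵀ A⁻¹ b · M` whenever `|u| ≤ M`, while the constant input `u = 1` has output
`y = s`, which approaches the bound.

That `(e^A)^k → 0` follows from Gelfand's formula: `e^A` is a polynomial in `A`, so by spectral
mapping its eigenvalues are the numbers `e^μ` for eigenvalues `μ` of `A`, all of modulus `< 1`.
-/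

open Matrix MeasureTheory Set

def IsClosedConvexCone {d : ℕ} (K : Set (Fin d → ℝ)) : Prop :=
  IsClosed K ∧ Convex ℝ K ∧ ∀ c : ℝ, 0 ≤ c → ∀ x ∈ K, c • x ∈ K

noncomputable def mexp {n : ℕ} (A : Matrix (Fin n) (Fin n) ℝ) : Matrix (Fin n) (Fin n) ℝ :=
  NormedSpace.exp A

def IsEigenvalue {n : ℕ} (A : Matrix (Fin n) (Fin n) ℝ) (μ : ℂ) : Prop :=
  Module.End.HasEigenvalue (Matrix.toLin' (A.map (Complex.ofReal))) μ

def Hurwitz {n : ℕ} (A : Matrix (Fin n) (Fin n) ℝ) : Prop :=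
  ∀ μ : ℂ, IsEigenvalue A μ → μ.re < 0

open Filter Topology Polynomial

theorem tendsto_pow_atTop_nhds_zero_of_forall_norm_lt_one {A : Type*} [NormedRing A]
    [NormedAlgebra ℂ A] [CompleteSpace A] {a : A} (h : ∀ z ∈ spectrum ℂ a, ‖z‖ < 1) :
    Tendsto (a ^ ·) atTop (𝓝 0) := by
  nontriviality A
  have hρ : spectralRadius ℂ a < 1 := by
    obtain ⟨z, hz, hz'⟩ := spectrum.exists_nnnorm_eq_spectralRadius a
    rw [← hz']
    exact_mod_cast h z hz
  obtain ⟨r, hr0, hρr, hr1⟩ := ENNReal.lt_iff_exists_real_btwn.mp hρ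
  have hr1' : r < 1 := by simpa using hr1
  have hroot := (spectrum.pow_norm_pow_one_div_tendsto_nhds_spectralRadius a).eventually
    (gt_mem_nhds hρr)
  refine squeeze_zero_norm' ?_ (tendsto_pow_atTop_nhds_zero_of_lt_one hr0 hr1')
  filter_upwards [hroot, eventually_gt_atTop 0] with k hk hk0
  rw [ENNReal.ofReal_lt_ofReal_iff_of_nonneg (by positivity), one_div,
    Real.rpow_inv_lt_iff_of_pos (norm_nonneg _) hr0 (by positivity), Real.rpow_natCast] at hk
  exact hk.le

section LinftyOpNorm

attribute [local instance] Matrix.linftyOpNormedRing Matrix.linftyOpNormedAlgebra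

variable {m 𝕜 : Type*} [Fintype m] [DecidableEq m]

theorem Matrix.exp_mem_adjoin_singleton [RCLike 𝕜] (M : Matrix m m 𝕜) :
    NormedSpace.exp M ∈ Algebra.adjoin 𝕜 {M} :=
  NormedSpace.exp_mem (R := 𝕜) (s := Algebra.adjoin 𝕜 {M})
    (Subalgebra.toSubmodule (Algebra.adjoin 𝕜 {M})).closed_of_finiteDimensional
    (Algebra.self_mem_adjoin_singleton 𝕜 M)

theorem Matrix.exp_mulVec_of_mulVec_eq_smul [RCLike 𝕜] {M : Matrix m m 𝕜} {μ : 𝕜} {v : m → 𝕜}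
    (hv : M *ᵥ v = μ • v) : NormedSpace.exp M *ᵥ v = NormedSpace.exp μ • v := by
  have hpow : ∀ k : ℕ, (M ^ k) *ᵥ v = μ ^ k • v := by
    intro k
    induction k with
    | zero => simp
    | succ k ih => rw [pow_succ', ← mulVec_mulVec, ih, mulVec_smul, hv, smul_smul, pow_succ]
  let L : Matrix m m 𝕜 →ₗ[𝕜] m → 𝕜 := (LinearMap.applyₗ v).comp Matrix.toLin'.toLinearMap
  have hL := (NormedSpace.exp_series_hasSum_exp' (𝕂 := 𝕜) M).map L
    (LinearMap.continuous_of_finiteDimensional L)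
  have hLapp : ∀ N, L N = N *ᵥ v := fun N => rfl
  simp only [Function.comp_def, hLapp, smul_mulVec, hpow, smul_smul] at hL
  exact hL.unique ((NormedSpace.exp_series_hasSum_exp' (𝕂 := 𝕜) μ).smul_const v)

theorem Matrix.spectrum_exp_subset (M : Matrix m m ℂ) :
    spectrum ℂ (NormedSpace.exp M) ⊆ Complex.exp '' spectrum ℂ M := by
  rcases subsingleton_or_nontrivial (Matrix m m ℂ) with _ | _
  · simp [spectrum.of_subsingleton]
  -- `exp M = p(M)`, so `ν = p(μ)` by spectral mapping, and `p(μ) = exp μ` on an eigenvector of `μ`.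
  intro ν hν
  obtain ⟨p, hp⟩ : ∃ p : ℂ[X], aeval M p = NormedSpace.exp M := by
    simpa [Algebra.adjoin_singleton_eq_range_aeval] using M.exp_mem_adjoin_singleton
  rw [← hp, spectrum.map_polynomial_aeval] at hν
  obtain ⟨μ, hμ, rfl⟩ := hν
  refine ⟨μ, hμ, ?_⟩
  rw [← Matrix.spectrum_toLin', ← Module.End.hasEigenvalue_iff_mem_spectrum] at hμ
  obtain ⟨v, hv⟩ := hμ.exists_hasEigenvector
  have hpoly := Module.End.aeval_apply_of_hasEigenvector (p := p) hv
  have haeval : aeval (toLin' M) p = toLin' (aeval M p) :=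
    aeval_algHom_apply (Matrix.toLinAlgEquiv' : Matrix m m ℂ ≃ₐ[ℂ] _).toAlgHom M p
  rw [haeval, Matrix.toLin'_apply, hp, exp_mulVec_of_mulVec_eq_smul hv.apply_eq_smul,
    ← Complex.exp_eq_exp_ℂ] at hpoly
  exact smul_left_injective ℂ hv.2 hpoly

theorem HasDerivAt.dotProduct_mulVec [NontriviallyNormedField 𝕜] [CompleteSpace 𝕜]
    {f : 𝕜 → Matrix m m 𝕜} {f' : Matrix m m 𝕜} {t : 𝕜} (hf : HasDerivAt f f' t) (w v : m → 𝕜) :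
    HasDerivAt (fun τ => w ⬝ᵥ f τ *ᵥ v) (w ⬝ᵥ f' *ᵥ v) t :=
  let L : Matrix m m 𝕜 →ₗ[𝕜] 𝕜 :=
    { toFun M := w ⬝ᵥ M *ᵥ v
      map_add' M N := by simp only [add_mulVec, dotProduct_add]
      map_smul' a M := by simp only [smul_mulVec, dotProduct_smul, RingHom.id_apply] }
  L.toContinuousLinearMap.hasFDerivAt.comp_hasDerivAt t hf

variable {n : ℕ} {A : Matrix (Fin n) (Fin n) ℝ}

theorem Hurwitz.re_neg_of_mem_spectrum (hA : Hurwitz A) {μ : ℂ}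
    (hμ : μ ∈ spectrum ℂ (A.map Complex.ofReal)) : μ.re < 0 :=
  hA μ (Module.End.hasEigenvalue_iff_mem_spectrum.mpr (by rwa [Matrix.spectrum_toLin']))

theorem Hurwitz.isUnit_det (hA : Hurwitz A) : IsUnit A.det := by
  have h0 : (0 : ℂ) ∉ spectrum ℂ (A.map Complex.ofReal) :=
    fun h => lt_irrefl _ (hA.re_neg_of_mem_spectrum h)
  rw [spectrum.zero_mem_iff, not_not, Matrix.isUnit_iff_isUnit_det,
    show (A.map Complex.ofReal).det = A.det from (RingHom.map_det Complex.ofRealHom A).symm,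
    isUnit_iff_ne_zero] at h0
  exact isUnit_iff_ne_zero.mpr (by exact_mod_cast h0)

theorem Hurwitz.tendsto_mexp_pow (hA : Hurwitz A) :
    Tendsto (fun k : ℕ => mexp A ^ k) atTop (𝓝 0) := by
  set Aℂ := A.map Complex.ofReal
  have hspec : ∀ z ∈ spectrum ℂ (NormedSpace.exp Aℂ), ‖z‖ < 1 := by
    rintro _ hz
    obtain ⟨μ, hμ, rfl⟩ := Aℂ.spectrum_exp_subset hz
    rw [Complex.norm_exp, Real.exp_lt_one_iff]
    exact hA.re_neg_of_mem_spectrum hμ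
  have hre : Continuous fun M : Matrix (Fin n) (Fin n) ℂ => M.map Complex.re :=
    continuous_id.matrix_map Complex.continuous_re
  have hof : Continuous (Complex.ofRealHom.mapMatrix : Matrix (Fin n) (Fin n) ℝ → _) :=
    continuous_id.matrix_map Complex.continuous_ofReal
  have hexp : (mexp A).map Complex.ofReal = NormedSpace.exp Aℂ :=
    NormedSpace.map_exp _ hof A
  have hcomplex : ∀ k : ℕ, mexp A ^ k = (NormedSpace.exp Aℂ ^ k).map Complex.re := by
    intro k
    rw [← hexp, show (mexp A).map Complex.ofReal ^ k = (mexp A ^ k).map Complex.ofReal from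
      (map_pow Complex.ofRealHom.mapMatrix (mexp A) k).symm]
    ext i j
    simp
  simpa [Function.comp_def, ← hcomplex] using
    (hre.tendsto 0).comp (tendsto_pow_atTop_nhds_zero_of_forall_norm_lt_one hspec)

variable (A) (b c : Fin n → ℝ)

noncomputable def impulseResponse (t : ℝ) : ℝ := c ⬝ᵥ mexp (t • A) *ᵥ b

noncomputable def stepResponse (t : ℝ) : ℝ := ∫ s in (0 : ℝ)..t, impulseResponse A b c s

theorem hasDerivAt_mexp_smul (t : ℝ) : HasDerivAt (fun τ => mexp (τ • A)) (mexp (t • A) * A) t :=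
  hasDerivAt_exp_smul_const A t

theorem hasDerivAt_impulseResponse (t : ℝ) :
    HasDerivAt (impulseResponse A b c) (c ⬝ᵥ (mexp (t • A) * A) *ᵥ b) t :=
  (hasDerivAt_mexp_smul A t).dotProduct_mulVec c b

theorem continuous_impulseResponse : Continuous (impulseResponse A b c) :=
  continuous_iff_continuousAt.2 fun t => (hasDerivAt_impulseResponse A b c t).continuousAt

theorem integral_impulseResponse_sub (t : ℝ) :
    ∫ s in (0 : ℝ)..t, impulseResponse A b c (t - s) = stepResponse A b c t := by
  rw [intervalIntegral.integral_comp_sub_left, sub_self, sub_zero, stepResponse]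

theorem stepResponse_eq (hA : IsUnit A.det) (t : ℝ) :
    stepResponse A b c t = c ⬝ᵥ (A⁻¹ * (mexp (t • A) - 1)) *ᵥ b := by
  have hderiv : ∀ s, HasDerivAt (fun τ => c ⬝ᵥ (A⁻¹ * (mexp (τ • A) - 1)) *ᵥ b)
      (impulseResponse A b c s) s := by
    intro s
    have hcomm : mexp (s • A) * A = A * mexp (s • A) :=
      (((Commute.refl A).smul_right s).exp_right).eq.symm
    have h := (((hasDerivAt_mexp_smul A s).sub_const 1).const_mul A⁻¹).dotProduct_mulVec c b
    rwa [hcomm, ← mul_assoc, Matrix.nonsing_inv_mul A hA, one_mul] at h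
  rw [stepResponse, intervalIntegral.integral_eq_sub_of_hasDerivAt (fun s _ => hderiv s)
    ((continuous_impulseResponse A b c).intervalIntegrable 0 t)]
  simp [mexp]

variable {A b c}

theorem Hurwitz.tendsto_stepResponse (hA : Hurwitz A) :
    Tendsto (fun k : ℕ => stepResponse A b c k) atTop (𝓝 (-(c ⬝ᵥ A⁻¹ *ᵥ b))) := by
  have hcont : Continuous fun M : Matrix (Fin n) (Fin n) ℝ => c ⬝ᵥ (A⁻¹ * (M - 1)) *ᵥ b := by
    fun_prop
  have h := (hcont.tendsto 0).comp hA.tendsto_mexp_pow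
  simp only [Function.comp_def, zero_sub, mul_neg, mul_one, neg_mulVec, dotProduct_neg] at h
  refine h.congr fun k => ?_
  simp only [stepResponse_eq A b c hA.isUnit_det, mexp, Nat.cast_smul_eq_nsmul, Matrix.exp_nsmul]

theorem monotoneOn_stepResponse (hpos : ∀ t, 0 ≤ t → 0 ≤ impulseResponse A b c t) :
    MonotoneOn (stepResponse A b c) (Ici 0) := by
  intro s hs t _ hst
  have hint := (continuous_impulseResponse A b c).intervalIntegrable (μ := volume)
  rw [← sub_nonneg, stepResponse, stepResponse, intervalIntegral.integral_interval_sub_left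
    (hint 0 t) (hint 0 s)]
  refine intervalIntegral.integral_nonneg hst fun τ hτ => ?_
  exact hpos τ (le_trans hs hτ.1)

theorem stepResponse_nonneg (hpos : ∀ t, 0 ≤ t → 0 ≤ impulseResponse A b c t) {t : ℝ}
    (ht : 0 ≤ t) : 0 ≤ stepResponse A b c t :=
  intervalIntegral.integral_nonneg ht fun s hs => hpos s hs.1

theorem stepResponse_le (hA : Hurwitz A) (hpos : ∀ t, 0 ≤ t → 0 ≤ impulseResponse A b c t)
    {t : ℝ} (ht : 0 ≤ t) : stepResponse A b c t ≤ -(c ⬝ᵥ A⁻¹ *ᵥ b) := by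
  refine ge_of_tendsto hA.tendsto_stepResponse ?_
  filter_upwards [eventually_ge_atTop ⌈t⌉₊] with k hk
  exact monotoneOn_stepResponse hpos ht (mem_Ici.2 k.cast_nonneg)
    ((Nat.le_ceil t).trans (by exact_mod_cast hk))

theorem abs_integral_impulseResponse_mul_le (hpos : ∀ t, 0 ≤ t → 0 ≤ impulseResponse A b c t)
    {u : ℝ → ℝ} {M : ℝ} (hu : ∀ s, 0 ≤ s → |u s| ≤ M) {t : ℝ} (ht : 0 ≤ t) :
    |∫ s in (0 : ℝ)..t, impulseResponse A b c (t - s) * u s| ≤ stepResponse A b c t * M := by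
  have hbound : ∀ s ∈ Ioc 0 t,
      ‖impulseResponse A b c (t - s) * u s‖ ≤ impulseResponse A b c (t - s) * M := by
    intro s hs
    have h0 := hpos (t - s) (by linarith [hs.2])
    rw [Real.norm_eq_abs, abs_mul, abs_of_nonneg h0]
    exact mul_le_mul_of_nonneg_left (hu s hs.1.le) h0
  have hint : IntervalIntegrable (fun s => impulseResponse A b c (t - s) * M) volume 0 t :=
    (((continuous_impulseResponse A b c).comp (continuous_sub_left t)).mul
      continuous_const).intervalIntegrable 0 t
  calc |∫ s in (0 : ℝ)..t, impulseResponse A b c (t - s) * u s|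
      ≤ ∫ s in (0 : ℝ)..t, impulseResponse A b c (t - s) * M :=
        intervalIntegral.norm_integral_le_of_norm_le ht (ae_of_all _ hbound) hint
    _ = stepResponse A b c t * M := by
        rw [intervalIntegral.integral_mul_const, integral_impulseResponse_sub]

theorem abs_integral_impulseResponse_mul_le_gain (hA : Hurwitz A)
    (hpos : ∀ t, 0 ≤ t → 0 ≤ impulseResponse A b c t) {u : ℝ → ℝ} {M : ℝ}
    (hu : ∀ s, 0 ≤ s → |u s| ≤ M) {t : ℝ} (ht : 0 ≤ t) :
    |∫ s in (0 : ℝ)..t, impulseResponse A b c (t - s) * u s| ≤ -(c ⬝ᵥ A⁻¹ *ᵥ b) * M :=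
  (abs_integral_impulseResponse_mul_le hpos hu ht).trans <|
    mul_le_mul_of_nonneg_right (stepResponse_le hA hpos ht) ((abs_nonneg _).trans (hu 0 le_rfl))

end LinftyOpNorm

/-- Remark 3.2: for an asymptotically stable SISO monotone linear system with nonnegative
impulse response `h(t) = cᵀ e^{At} b`, the `L^∞`-to-`L^∞` induced gain of the zero-state
response `y(t) = ∫₀ᵗ h(t-s) u(s) ds` equals the steady-state gain `-cᵀ A⁻¹ b`. -/
theorem stmt6 {n : ℕ} (A : Matrix (Fin n) (Fin n) ℝ) (b c : Fin n → ℝ)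
    (hA : Hurwitz A)
    (hpos : ∀ t : ℝ, 0 ≤ t → 0 ≤ c ⬝ᵥ (mexp (t • A)).mulVec b) :
    (∀ u : ℝ → ℝ, Measurable u → ∀ M : ℝ, (∀ s : ℝ, 0 ≤ s → |u s| ≤ M) →
      ∀ t : ℝ, 0 ≤ t →
        |∫ s in (0:ℝ)..t, (c ⬝ᵥ (mexp ((t - s) • A)).mulVec b) * u s| ≤
          (-(c ⬝ᵥ A⁻¹.mulVec b)) * M) ∧
    sSup {r : ℝ | ∃ u : ℝ → ℝ, Measurable u ∧ (∀ s : ℝ, |u s| ≤ 1) ∧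
        ∃ t : ℝ, 0 ≤ t ∧ r = |∫ s in (0:ℝ)..t, (c ⬝ᵥ (mexp ((t - s) • A)).mulVec b) * u s|} =
      -(c ⬝ᵥ A⁻¹.mulVec b) := by
  refine ⟨fun u _ M hu t ht => abs_integral_impulseResponse_mul_le_gain hA hpos hu ht,
    IsLUB.csSup_eq ⟨?_, fun x hx => ?_⟩ ⟨0, 0, measurable_const, by simp, 0, le_rfl, by simp⟩⟩
  · rintro _ ⟨u, -, hu, t, ht, rfl⟩
    exact mul_one (-(c ⬝ᵥ A⁻¹ *ᵥ b)) ▸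
      abs_integral_impulseResponse_mul_le_gain hA hpos (fun s _ => hu s) ht
  · refine le_of_tendsto' hA.tendsto_stepResponse fun k =>
      hx ⟨1, measurable_const, by simp, k, k.cast_nonneg, ?_⟩
    show _ = |∫ s in (0:ℝ)..k, impulseResponse A b c (k - s) * 1|
    simp only [mul_one, integral_impulseResponse_sub,
      abs_of_nonneg (stepResponse_nonneg hpos k.cast_nonneg)]
end

section
/- Let f : ℝⁿ × ℝᵐ → ℝⁿ be a C¹ vector field, let K ⊆ ℝⁿ and K^U ⊆ ℝᵐ be closed convex cones, and suppose f(x̄, ū) = 0 for some x̄ ∈ ℝⁿ, ū ∈ ℝᵐ. Assume the differential characterization of monotonicity: for all x₁, x₂ ∈ ℝⁿ and u₁, u₂ ∈ ℝᵐ with x₁ − x₂ ∈ K and u₁ − u₂ ∈ K^U, one has f(x₁, u₁) − f(x₂, u₂) ∈ TC_{x₁−x₂}(K). Then the linearization at (x̄, ū) satisfies the same condition: for all z ∈ K and v ∈ K^U, D_x f(x̄, ū) z + D_u f(x̄, ū) v ∈ closure(TC_z(K)). (Lemma 3.3: the linearization of a monotone system at an equilibrium is monotone.) -/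
/-!
The difference quotients `t⁻¹ • (f (x̄ + t z, ū + t v) - f (x̄, ū))`, `t > 0`, converge to
`D_x f z + D_u f v`. Monotonicity puts `f (x̄ + t z, ū + t v) - f (x̄, ū)` in the tangent cone
to `K` at `t z`, which for a cone is contained in the tangent cone at `z`. Tangent cones are
closed under scaling, so every difference quotient lies there and the limit lies in its closure.
-/

open Matrix MeasureTheory Set

open Filter Topology
open scoped Pointwise

section TangentCone

variable {𝕜 E : Type*} [NontriviallyNormedField 𝕜] [NormedAddCommGroup E] [NormedSpace 𝕜 E]
  {s : Set E} {x y : E}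

theorem smul_mem_tangentConeAt (t : 𝕜) (hy : y ∈ tangentConeAt 𝕜 s x) :
    t • y ∈ tangentConeAt 𝕜 s x := by
  obtain ⟨α, l, hl, c, d, hd₀, hds, hcd⟩ := exists_fun_of_mem_tangentConeAt hy
  refine mem_tangentConeAt_of_seq l (fun n ↦ t * c n) d hd₀ hds ?_
  simpa only [mul_smul] using hcd.const_smul t

theorem tangentConeAt_smul_subset {t : 𝕜} (ht : t ≠ 0) (hs : t⁻¹ • s ⊆ s) :
    tangentConeAt 𝕜 s (t • x) ⊆ tangentConeAt 𝕜 s x := by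
  intro y hy
  obtain ⟨α, l, hl, c, d, hd₀, hds, hcd⟩ := exists_fun_of_mem_tangentConeAt hy
  refine tangentConeAt_mono hs <|
    mem_tangentConeAt_of_seq l (fun n ↦ c n * t) (fun n ↦ t⁻¹ • d n) ?_ ?_ ?_
  · simpa using hd₀.const_smul t⁻¹
  · filter_upwards [hds] with n hn
    simpa [smul_add, smul_smul, inv_mul_cancel₀ ht] using Set.smul_mem_smul_set (a := t⁻¹) hn
  · simpa only [smul_smul, mul_inv_cancel_right₀ ht] using hcd

end TangentCone

theorem HasFDerivAt.apply_mem_closure_of_slope_mem {E F : Type*} [NormedAddCommGroup E]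
    [NormedSpace ℝ E] [NormedAddCommGroup F] [NormedSpace ℝ F] {f : E → F} {f' : E →L[ℝ] F}
    {x v : E} {C : Set F} (hf : HasFDerivAt f f' x)
    (hC : ∀ t : ℝ, 0 < t → t⁻¹ • (f (x + t • v) - f x) ∈ C) : f' v ∈ closure C := by
  refine mem_closure_of_tendsto (hf.lim_real v) ?_
  filter_upwards [eventually_gt_atTop 0] with c hc
  simpa using hC c⁻¹ (inv_pos.2 hc)

theorem stmt7_general {n m : ℕ} (f : (Fin n → ℝ) × (Fin m → ℝ) → (Fin n → ℝ))
    (hf : ContDiff ℝ 1 f)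
    (K : Set (Fin n → ℝ)) (KU : Set (Fin m → ℝ))
    (hK : IsClosedConvexCone K) (hKU : IsClosedConvexCone KU)
    (xbar : Fin n → ℝ) (ubar : Fin m → ℝ)
    (hmono : ∀ x₁ x₂ : Fin n → ℝ, ∀ u₁ u₂ : Fin m → ℝ,
      x₁ - x₂ ∈ K → u₁ - u₂ ∈ KU →
        f (x₁, u₁) - f (x₂, u₂) ∈ tangentConeAt ℝ K (x₁ - x₂)) :
    ∀ z ∈ K, ∀ v ∈ KU,
      fderiv ℝ f (xbar, ubar) (z, 0) + fderiv ℝ f (xbar, ubar) (0, v) ∈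
        closure (tangentConeAt ℝ K z) := by
  intro z hz v hv
  rw [← map_add, Prod.mk_add_mk, add_zero, zero_add]
  refine (hf.differentiable one_ne_zero (xbar, ubar)).hasFDerivAt
    |>.apply_mem_closure_of_slope_mem fun t ht ↦ smul_mem_tangentConeAt _ ?_
  have hincr := hmono (xbar + t • z) xbar (ubar + t • v) ubar
    (by simpa using hK.2.2 t ht.le z hz) (by simpa using hKU.2.2 t ht.le v hv)
  rw [add_sub_cancel_left] at hincr
  refine tangentConeAt_smul_subset ht.ne' ?_ hincr
  exact Set.smul_set_subset_iff.2 fun y hy ↦ hK.2.2 _ (inv_nonneg.2 ht.le) y hy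

/-- Lemma 3.3: the linearization of a monotone system at an equilibrium is monotone. -/
theorem stmt7 {n m : ℕ} (f : (Fin n → ℝ) × (Fin m → ℝ) → (Fin n → ℝ))
    (hf : ContDiff ℝ 1 f)
    (K : Set (Fin n → ℝ)) (KU : Set (Fin m → ℝ))
    (hK : IsClosedConvexCone K) (hKU : IsClosedConvexCone KU)
    (xbar : Fin n → ℝ) (ubar : Fin m → ℝ) (heq : f (xbar, ubar) = 0)
    (hmono : ∀ x₁ x₂ : Fin n → ℝ, ∀ u₁ u₂ : Fin m → ℝ,
      x₁ - x₂ ∈ K → u₁ - u₂ ∈ KU →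
        f (x₁, u₁) - f (x₂, u₂) ∈ tangentConeAt ℝ K (x₁ - x₂)) :
    ∀ z ∈ K, ∀ v ∈ KU,
      fderiv ℝ f (xbar, ubar) (z, 0) + fderiv ℝ f (xbar, ubar) (0, v) ∈
        closure (tangentConeAt ℝ K z) :=
  stmt7_general f hf K KU hK hKU xbar ubar hmono
end

section
/- Let h : [0,∞) → ℝ be integrable with h(t) ≥ 0 for almost every t ≥ 0, and assume h is not almost everywhere zero. Define w(λ) = ∫₀^∞ h(t) e^{−λt} dt for λ ≥ 0, and assume the transversality condition w(0) ≠ 1. Then w(λ) ≠ 1 for all λ ≥ 0 if and only if w(0) < 1. (Remark 4.2(b): every real pole of the unity-feedback closed-loop transfer function is negative if and only if w(0) < 1.) -/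
/-!
`w` is continuous on `[0, ∞)` and tends to `0` at infinity, both by dominated convergence
with dominating function `|h|`. If `w(0) > 1`, the intermediate value theorem therefore
yields some `λ ≥ 0` with `w(λ) = 1`. If `h ≥ 0`, then `w` is antitone on `[0, ∞)`, so
`w(λ) ≤ w(0) < 1` whenever `w(0) < 1`.
-/

open MeasureTheory Set Filter

/-- The real Laplace transform of the impulse response `h`. -/
noncomputable def laplace (h : ℝ → ℝ) (l : ℝ) : ℝ :=
  ∫ t in Set.Ioi (0:ℝ), h t * Real.exp (-(l * t))

open Topology

lemma norm_mul_exp_neg_mul_le (x : ℝ) {l t : ℝ} (hl : 0 ≤ l) (ht : 0 ≤ t) :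
    ‖x * Real.exp (-(l * t))‖ ≤ ‖x‖ := by
  rw [norm_mul, Real.norm_of_nonneg (Real.exp_pos _).le]
  exact mul_le_of_le_one_right (norm_nonneg x)
    (Real.exp_le_one_iff.mpr (neg_nonpos.mpr (mul_nonneg hl ht)))

section Laplace

variable {h : ℝ → ℝ}

lemma aestronglyMeasurable_mul_exp (hint : IntegrableOn h (Ioi 0)) (l : ℝ) :
    AEStronglyMeasurable (fun t => h t * Real.exp (-(l * t))) (volume.restrict (Ioi 0)) :=
  hint.aestronglyMeasurable.mul
    (by fun_prop : Continuous fun t => Real.exp (-(l * t))).aestronglyMeasurable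

lemma ae_norm_mul_exp_le {l : ℝ} (hl : 0 ≤ l) :
    ∀ᵐ t ∂(volume.restrict (Ioi (0:ℝ))), ‖h t * Real.exp (-(l * t))‖ ≤ ‖h t‖ := by
  filter_upwards [ae_restrict_mem measurableSet_Ioi] with t ht
  exact norm_mul_exp_neg_mul_le (h t) hl (le_of_lt ht)

lemma integrableOn_mul_exp (hint : IntegrableOn h (Ioi 0)) {l : ℝ} (hl : 0 ≤ l) :
    IntegrableOn (fun t => h t * Real.exp (-(l * t))) (Ioi 0) :=
  hint.norm.mono' (aestronglyMeasurable_mul_exp hint l) (ae_norm_mul_exp_le hl)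

lemma continuousOn_laplace (hint : IntegrableOn h (Ioi 0)) : ContinuousOn (laplace h) (Ici 0) :=
  continuousOn_of_dominated (fun l _ => aestronglyMeasurable_mul_exp hint l)
    (fun _ hl => ae_norm_mul_exp_le hl) hint.norm (.of_forall fun _ => by fun_prop)

lemma tendsto_laplace_atTop (hint : IntegrableOn h (Ioi 0)) :
    Tendsto (laplace h) atTop (𝓝 0) := by
  have hlim : ∀ᵐ t ∂(volume.restrict (Ioi (0:ℝ))),
      Tendsto (fun l => h t * Real.exp (-(l * t))) atTop (𝓝 0) := by
    filter_upwards [ae_restrict_mem measurableSet_Ioi] with t ht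
    have hexp : Tendsto (fun l : ℝ => -(l * t)) atTop atBot :=
      tendsto_neg_atTop_atBot.comp (tendsto_id.atTop_mul_const ht)
    simpa using (Real.tendsto_exp_atBot.comp hexp).const_mul (h t)
  rw [← integral_zero ℝ ℝ]
  exact tendsto_integral_filter_of_dominated_convergence _
    (.of_forall (aestronglyMeasurable_mul_exp hint))
    ((eventually_ge_atTop 0).mono fun _ hl => ae_norm_mul_exp_le hl) hint.norm hlim

lemma laplace_antitoneOn (hint : IntegrableOn h (Ioi 0))
    (hpos : ∀ᵐ t ∂(volume.restrict (Ioi (0:ℝ))), 0 ≤ h t) :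
    AntitoneOn (laplace h) (Ici 0) := by
  intro l₁ hl₁ l₂ _ hl
  refine integral_mono_ae (integrableOn_mul_exp hint (le_trans hl₁ hl))
    (integrableOn_mul_exp hint hl₁) ?_
  filter_upwards [hpos, ae_restrict_mem measurableSet_Ioi] with t h0 ht
  exact mul_le_mul_of_nonneg_left
    (Real.exp_le_exp.mpr (neg_le_neg (mul_le_mul_of_nonneg_right hl (le_of_lt ht)))) h0

lemma exists_laplace_eq (hint : IntegrableOn h (Ioi 0)) {c : ℝ} (hc : 0 < c)
    (hc0 : c ≤ laplace h 0) : ∃ l, 0 ≤ l ∧ laplace h l = c := by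
  obtain ⟨L, hLc, hL0⟩ :=
    ((tendsto_laplace_atTop hint).eventually (eventually_lt_nhds hc)).and
      (eventually_ge_atTop 0) |>.exists
  obtain ⟨l, hl, hval⟩ := intermediate_value_Icc' hL0
    ((continuousOn_laplace hint).mono Icc_subset_Ici_self) ⟨hLc.le, hc0⟩
  exact ⟨l, hl.1, hval⟩

end Laplace

theorem stmt15_general (h : ℝ → ℝ)
    (hint : IntegrableOn h (Set.Ioi (0:ℝ)))
    (hpos : ∀ᵐ t ∂(volume.restrict (Set.Ioi (0:ℝ))), 0 ≤ h t) :
    (∀ l : ℝ, 0 ≤ l → laplace h l ≠ 1) ↔ laplace h 0 < 1 := by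
  constructor
  · intro hall
    refine (hall 0 le_rfl).lt_or_gt.resolve_right fun h1 => ?_
    obtain ⟨l, hl, hval⟩ := exists_laplace_eq hint one_pos h1.le
    exact hall l hl hval
  · intro h1 l hl
    exact (lt_of_le_of_lt (laplace_antitoneOn hint hpos self_mem_Ici hl hl) h1).ne

/-- Remark 4.2(b): under the transversality condition `w(0) ≠ 1`, every real pole of the
unity-feedback closed loop is negative (`w(λ) ≠ 1` for all `λ ≥ 0`) iff `w(0) < 1`. -/
theorem stmt15 (h : ℝ → ℝ)
    (hint : IntegrableOn h (Set.Ioi (0:ℝ)))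
    (hpos : ∀ᵐ t ∂(volume.restrict (Set.Ioi (0:ℝ))), 0 ≤ h t)
    (hne : ¬ (∀ᵐ t ∂(volume.restrict (Set.Ioi (0:ℝ))), h t = 0))
    (htrans : laplace h 0 ≠ 1) :
    (∀ l : ℝ, 0 ≤ l → laplace h l ≠ 1) ↔ laplace h 0 < 1 :=
  stmt15_general h hint hpos
end

section
/- Let N be a positive natural number and let σ : Fin N → Fin N → ℤ be a symmetric sign function (σ i j = σ j i, σ i j ∈ {−1, 0, 1}, σ i i = 0), encoding the signed incidence graph whose edges are the pairs {i,j} with σ i j ≠ 0. Then the following are equivalent: (i) there exists a vertex sign assignment ε : Fin N → ℤ with ε i ∈ {−1, 1} for all i, such that σ i j = ε i · ε j whenever σ i j ≠ 0; (ii) the graph contains no negative simple cycle, i.e. there is no finite sequence of vertices v₀, v₁, …, v_L with L ≥ 1, v_L = v₀, v₀, …, v_{L−1} pairwise distinct, σ v_k v_{k+1} ≠ 0 for all k < L, and ∏_{k<L} σ v_k v_{k+1} = −1. (Combinatorial core of Proposition 2.1: a system admitting an incidence graph is monotone with respect to some orthants if and only if its incidence graph contains no negative simple cycles; condition (i) is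 equivalent to monotonicity with respect to the orthant determined by the signs ε.) -/
/-!
A walk of length `n` is a sequence `v : ℕ → V` read on `[0, n]`. If `σ i j = ε i ε j` on edges, the sign of a walk telescopes to
`ε (v n) ε (v 0)`, so closed walks are positive. Conversely, a negative closed walk of minimal
length is a simple cycle: a repeated vertex would split it into two shorter closed walks whose
signs multiply to `-1`. Without negative closed walks, all walks between two vertices have the
same sign, so fixing a root in each class of the reachability relation and letting `ε i` be the
sign of any walk from the root of `i` to `i` gives the required vertex signs.
-/

open Finset

namespace SignedGraph

variable {V : Type*} (σ : V → V → ℤ)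

def IsSignedWalk (n : ℕ) (v : ℕ → V) : Prop := ∀ k < n, σ (v k) (v (k + 1)) ≠ 0

def walkSign (n : ℕ) (v : ℕ → V) : ℤ := ∏ k ∈ range n, σ (v k) (v (k + 1))

def walkAppend (m : ℕ) (v u : ℕ → V) : ℕ → V := fun i => if i ≤ m then v i else u (i - m)

def SignedReachable (i j : V) : Prop := ∃ n v, v 0 = i ∧ v n = j ∧ IsSignedWalk σ n v

variable {σ}

lemma walkSign_add (m n : ℕ) (v : ℕ → V) :
    walkSign σ (m + n) v = walkSign σ m v * walkSign σ n (fun i => v (m + i)) :=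
  prod_range_add _ m n

lemma isSignedWalk_add {m n : ℕ} {v : ℕ → V} :
    IsSignedWalk σ (m + n) v ↔ IsSignedWalk σ m v ∧ IsSignedWalk σ n (fun i => v (m + i)) := by
  refine ⟨fun h => ⟨fun k hk => h k (by omega), fun k hk => h (m + k) (by omega)⟩, ?_⟩
  rintro ⟨h₁, h₂⟩ k hk
  rcases lt_or_ge k m with hkm | hkm
  · exact h₁ k hkm
  · obtain ⟨j, rfl⟩ := Nat.exists_eq_add_of_le hkm
    exact h₂ j (by omega)

lemma walkSign_congr {n : ℕ} {v w : ℕ → V} (h : ∀ i ≤ n, v i = w i) :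
    walkSign σ n v = walkSign σ n w :=
  prod_congr rfl fun k hk => by
    have hk := mem_range.1 hk
    rw [h k hk.le, h (k + 1) hk]

lemma IsSignedWalk.congr {n : ℕ} {v w : ℕ → V} (hv : IsSignedWalk σ n v)
    (h : ∀ i ≤ n, v i = w i) : IsSignedWalk σ n w := fun k hk => by
  rw [← h k hk.le, ← h (k + 1) hk]
  exact hv k hk

lemma walkAppend_of_le {m i : ℕ} {v u : ℕ → V} (h : i ≤ m) : walkAppend m v u i = v i :=
  if_pos h

lemma walkAppend_add {m : ℕ} {v u : ℕ → V} (h : u 0 = v m) (i : ℕ) :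
    walkAppend m v u (m + i) = u i := by
  rcases i.eq_zero_or_pos with rfl | hi
  · simp [walkAppend, h]
  · simp [walkAppend, show ¬ m + i ≤ m by omega]

lemma walkSign_append {m n : ℕ} {v u : ℕ → V} (h : u 0 = v m) :
    walkSign σ (m + n) (walkAppend m v u) = walkSign σ m v * walkSign σ n u := by
  rw [walkSign_add, walkSign_congr fun i hi => walkAppend_of_le hi]
  simp only [walkAppend_add h]

lemma IsSignedWalk.append {m n : ℕ} {v u : ℕ → V} (hv : IsSignedWalk σ m v)
    (hu : IsSignedWalk σ n u) (h : u 0 = v m) : IsSignedWalk σ (m + n) (walkAppend m v u) := by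
  refine isSignedWalk_add.2 ⟨hv.congr fun i hi => (walkAppend_of_le hi).symm, ?_⟩
  simpa only [walkAppend_add h] using hu

lemma walkSign_reverse (hsymm : ∀ i j, σ i j = σ j i) (n : ℕ) (v : ℕ → V) :
    walkSign σ n (fun i => v (n - i)) = walkSign σ n v := by
  unfold walkSign
  rw [← prod_range_reflect (fun k => σ (v k) (v (k + 1)))]
  refine prod_congr rfl fun j hj => ?_
  have hj := mem_range.1 hj
  dsimp only
  rw [hsymm, show n - (j + 1) = n - 1 - j by omega, show n - 1 - j + 1 = n - j by omega]

lemma IsSignedWalk.reverse (hsymm : ∀ i j, σ i j = σ j i) {n : ℕ} {v : ℕ → V}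
    (hv : IsSignedWalk σ n v) : IsSignedWalk σ n (fun i => v (n - i)) := fun k hk => by
  have h := hv (n - 1 - k) (by omega)
  rwa [hsymm, show n - 1 - k + 1 = n - k by omega, show n - 1 - k = n - (k + 1) by omega] at h

lemma IsSignedWalk.isUnit_walkSign (hval : ∀ i j, σ i j = -1 ∨ σ i j = 0 ∨ σ i j = 1)
    {n : ℕ} {v : ℕ → V} (hv : IsSignedWalk σ n v) : IsUnit (walkSign σ n v) :=
  IsUnit.prod_iff.2 fun k hk => Int.isUnit_iff.2 <| by
    have := hval (v k) (v (k + 1))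
    have := hv k (mem_range.1 hk)
    omega

lemma IsSignedWalk.potential_eq {ε : V → ℤ} (hε : ∀ i, ε i = 1 ∨ ε i = -1)
    (hbal : ∀ i j, σ i j ≠ 0 → σ i j = ε i * ε j) {n : ℕ} {v : ℕ → V}
    (hv : IsSignedWalk σ n v) : ε (v n) = walkSign σ n v * ε (v 0) := by
  induction n with
  | zero => simp [walkSign]
  | succ n ih =>
    have ih := ih fun k hk => hv k (by omega)
    have hsq : ε (v n) * ε (v n) = 1 := by rcases hε (v n) with h | h <;> rw [h] <;> norm_num
    rw [walkSign, prod_range_succ, ← walkSign, hbal _ _ (hv n (by omega))]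
    linear_combination (ε (v n) * ε (v (n + 1))) * ih - ε (v (n + 1)) * hsq

lemma IsSignedWalk.walkSign_eq_one_of_balanced {ε : V → ℤ} (hε : ∀ i, ε i = 1 ∨ ε i = -1)
    (hbal : ∀ i j, σ i j ≠ 0 → σ i j = ε i * ε j) {n : ℕ} {v : ℕ → V}
    (hv : IsSignedWalk σ n v) (hclosed : v n = v 0) : walkSign σ n v = 1 := by
  have h := hv.potential_eq hε hbal
  rw [hclosed] at h
  rcases hε (v 0) with h₀ | h₀ <;> rw [h₀] at h <;> linarith

lemma walkSign_split {n k l : ℕ} {v : ℕ → V} (hkl : k ≤ l) (hln : l ≤ n) (hv : v l = v k) :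
    walkSign σ n v = walkSign σ (l - k) (fun i => v (k + i)) *
      walkSign σ (k + (n - l)) (walkAppend k v fun i => v (l + i)) := by
  obtain ⟨a, rfl⟩ := Nat.exists_eq_add_of_le hkl
  obtain ⟨b, rfl⟩ := Nat.exists_eq_add_of_le hln
  rw [Nat.add_sub_cancel_left, Nat.add_sub_cancel_left, walkSign_append (by simpa using hv),
    walkSign_add (k + a), walkSign_add k]
  ring

lemma IsSignedWalk.split {n k l : ℕ} {v : ℕ → V} (h : IsSignedWalk σ n v) (hkl : k ≤ l)
    (hln : l ≤ n) (hv : v l = v k) :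
    IsSignedWalk σ (l - k) (fun i => v (k + i)) ∧
      IsSignedWalk σ (k + (n - l)) (walkAppend k v fun i => v (l + i)) := by
  obtain ⟨a, rfl⟩ := Nat.exists_eq_add_of_le hkl
  obtain ⟨b, rfl⟩ := Nat.exists_eq_add_of_le hln
  obtain ⟨h₁₂, h₃⟩ := isSignedWalk_add.1 h
  obtain ⟨h₁, h₂⟩ := isSignedWalk_add.1 h₁₂
  rw [Nat.add_sub_cancel_left, Nat.add_sub_cancel_left]
  exact ⟨h₂, h₁.append h₃ (by simpa using hv)⟩

theorem exists_simple_cycle_of_walkSign_eq_neg_one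
    (hval : ∀ i j, σ i j = -1 ∨ σ i j = 0 ∨ σ i j = 1) (n : ℕ) (v : ℕ → V)
    (hv : IsSignedWalk σ n v) (hclosed : v n = v 0) (hneg : walkSign σ n v = -1) :
    ∃ (L : ℕ) (w : ℕ → V), 1 ≤ L ∧ w L = w 0 ∧
      (∀ k l : ℕ, k < L → l < L → k ≠ l → w k ≠ w l) ∧
      IsSignedWalk σ L w ∧ walkSign σ L w = -1 := by
  induction n using Nat.strong_induction_on generalizing v with
  | _ n ih =>
  have hn : 1 ≤ n := Nat.one_le_iff_ne_zero.2 <| by rintro rfl; simp [walkSign] at hneg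
  by_cases hsimple : ∀ k l : ℕ, k < n → l < n → k ≠ l → v k ≠ v l
  · exact ⟨n, v, hn, hclosed, hsimple, hv, hneg⟩
  push Not at hsimple
  obtain ⟨k, l, hk, hl, hkl, hvkl⟩ := hsimple
  wlog hlt : k < l generalizing k l
  · exact this l k hl hk hkl.symm hvkl.symm (by omega)
  obtain ⟨hinner, houter⟩ := hv.split hlt.le hl.le hvkl.symm
  have hsplit := walkSign_split (σ := σ) hlt.le hl.le hvkl.symm
  rcases Int.isUnit_iff.1 (hinner.isUnit_walkSign hval) with hinner_pos | hinner_neg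
  · refine ih _ (by omega) _ houter ?_ (by rwa [hinner_pos, one_mul, hneg, eq_comm] at hsplit)
    rw [walkAppend_add (by simpa using hvkl.symm), walkAppend_of_le (Nat.zero_le k),
      Nat.add_sub_cancel' hl.le, hclosed]
  · refine ih _ (by omega) _ hinner ?_ hinner_neg
    simpa [Nat.add_sub_cancel' hlt.le] using hvkl.symm

lemma signedReachable_equivalence (hsymm : ∀ i j, σ i j = σ j i) :
    Equivalence (SignedReachable σ) where
  refl i := ⟨0, fun _ => i, rfl, rfl, fun _ hk => absurd hk (Nat.not_lt_zero _)⟩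
  symm := fun ⟨n, v, hv0, hvn, hv⟩ => ⟨n, fun i => v (n - i), by simpa, by simpa, hv.reverse hsymm⟩
  trans := fun ⟨m, v, hv0, hvm, hv⟩ ⟨n, u, hu0, hun, hu⟩ =>
    ⟨m + n, walkAppend m v u, by rw [walkAppend_of_le (Nat.zero_le m), hv0],
      by rw [walkAppend_add (hu0.trans hvm.symm), hun], hv.append hu (hu0.trans hvm.symm)⟩

/-- Going out along `v` and back along `u` gives a closed walk of sign
`walkSign v * walkSign u`, which cannot be `-1`. -/
lemma walkSign_eq_of_forall_closed_ne_neg_one (hsymm : ∀ i j, σ i j = σ j i)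
    (hval : ∀ i j, σ i j = -1 ∨ σ i j = 0 ∨ σ i j = 1)
    (hneg : ∀ n v, IsSignedWalk σ n v → v n = v 0 → walkSign σ n v ≠ -1)
    {m n : ℕ} {v u : ℕ → V} (hv : IsSignedWalk σ m v) (hu : IsSignedWalk σ n u)
    (h₀ : u 0 = v 0) (h₁ : u n = v m) : walkSign σ m v = walkSign σ n u := by
  have hback : (fun i => u (n - i)) 0 = v m := by simpa using h₁
  have hloop := hneg (m + n) _ (hv.append (hu.reverse hsymm) hback) <| by
    rw [walkAppend_add hback, walkAppend_of_le (Nat.zero_le m)]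
    simpa using h₀
  rw [walkSign_append hback, walkSign_reverse hsymm] at hloop
  rcases Int.isUnit_iff.1 (hv.isUnit_walkSign hval) with h | h <;>
    rcases Int.isUnit_iff.1 (hu.isUnit_walkSign hval) with h' | h' <;> simp_all

theorem exists_balanced_of_forall_closed_ne_neg_one (hsymm : ∀ i j, σ i j = σ j i)
    (hval : ∀ i j, σ i j = -1 ∨ σ i j = 0 ∨ σ i j = 1)
    (hneg : ∀ n v, IsSignedWalk σ n v → v n = v 0 → walkSign σ n v ≠ -1) :
    ∃ ε : V → ℤ, (∀ i, ε i = 1 ∨ ε i = -1) ∧ ∀ i j, σ i j ≠ 0 → σ i j = ε i * ε j := by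
  let S : Setoid V := ⟨SignedReachable σ, signedReachable_equivalence hsymm⟩
  choose n v hv0 hvn hv using fun i => Quotient.mk_out (s := S) i
  refine ⟨fun i => walkSign σ (n i) (v i), fun i => Int.isUnit_iff.1 ((hv i).isUnit_walkSign hval),
    fun i j hij => ?_⟩
  let e : ℕ → V := fun k => if k = 0 then i else j
  have he : IsSignedWalk σ 1 e := fun k hk => by simpa [e, show k = 0 by omega] using hij
  have hroot : (Quotient.mk S i).out = (Quotient.mk S j).out :=
    congrArg _ (Quotient.sound ⟨1, e, rfl, rfl, he⟩)
  have hext := walkSign_eq_of_forall_closed_ne_neg_one hsymm hval hneg (hv j)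
    ((hv i).append he (hvn i).symm) (by rw [walkAppend_of_le (Nat.zero_le _), hv0, hv0, hroot])
    (by rw [walkAppend_add (hvn i).symm, hvn]; rfl)
  rw [walkSign_append (hvn i).symm] at hext
  have he_sign : walkSign σ 1 e = σ i j := by simp [walkSign, e]
  rcases Int.isUnit_iff.1 ((hv i).isUnit_walkSign hval) with h | h <;>
    simp only [h, he_sign] at hext ⊢ <;> linarith

end SignedGraph

theorem stmt18_general (N : ℕ) (σ : Fin N → Fin N → ℤ)
    (hsymm : ∀ i j : Fin N, σ i j = σ j i)
    (hval : ∀ i j : Fin N, σ i j = -1 ∨ σ i j = 0 ∨ σ i j = 1) :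
    (∃ ε : Fin N → ℤ, (∀ i : Fin N, ε i = 1 ∨ ε i = -1) ∧
        ∀ i j : Fin N, σ i j ≠ 0 → σ i j = ε i * ε j) ↔
    ¬ ∃ (L : ℕ) (v : ℕ → Fin N), 1 ≤ L ∧ v L = v 0 ∧
        (∀ k l : ℕ, k < L → l < L → k ≠ l → v k ≠ v l) ∧
        (∀ k : ℕ, k < L → σ (v k) (v (k + 1)) ≠ 0) ∧
        (∏ k ∈ Finset.range L, σ (v k) (v (k + 1))) = -1 := by
  constructor
  · rintro ⟨ε, hε, hbal⟩ ⟨L, v, -, hclosed, -, hv, hneg⟩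
    have hpos : SignedGraph.walkSign σ L v = 1 :=
      SignedGraph.IsSignedWalk.walkSign_eq_one_of_balanced hε hbal hv hclosed
    exact absurd (hpos.symm.trans hneg) (by norm_num)
  · intro hcycle
    exact SignedGraph.exists_balanced_of_forall_closed_ne_neg_one hsymm hval
      fun n v hv hclosed hneg =>
        hcycle (SignedGraph.exists_simple_cycle_of_walkSign_eq_neg_one hval n v hv hclosed hneg)

/-- Combinatorial core of Proposition 2.1: a signed incidence graph admits a vertex sign
assignment `ε` with `σ i j = ε i ε j` on all edges (equivalently, the system is monotone
with respect to the orthant determined by `ε`) if and only if the graph contains no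
negative simple cycle. -/
theorem stmt18 (N : ℕ) (hN : 0 < N) (σ : Fin N → Fin N → ℤ)
    (hsymm : ∀ i j : Fin N, σ i j = σ j i)
    (hval : ∀ i j : Fin N, σ i j = -1 ∨ σ i j = 0 ∨ σ i j = 1)
    (hdiag : ∀ i : Fin N, σ i i = 0) :
    (∃ ε : Fin N → ℤ, (∀ i : Fin N, ε i = 1 ∨ ε i = -1) ∧
        ∀ i j : Fin N, σ i j ≠ 0 → σ i j = ε i * ε j) ↔
    ¬ ∃ (L : ℕ) (v : ℕ → Fin N), 1 ≤ L ∧ v L = v 0 ∧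
        (∀ k l : ℕ, k < L → l < L → k ≠ l → v k ≠ v l) ∧
        (∀ k : ℕ, k < L → σ (v k) (v (k + 1)) ≠ 0) ∧
        (∏ k ∈ Finset.range L, σ (v k) (v (k + 1))) = -1 :=
  stmt18_general N σ hsymm hval
end
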